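/- arXiv:0901.3215 — 7 statements merged into one kernel-verified Lean document; each statement's English description precedes it below -/
import Mathlib

section
/- For the seed Q_p,q = {0,...,p-1} ∪ {p+1,...,p+q} (pattern #^p - #^q) with p ≥ q ≥ 1, the longest binary word in (1*0)^1 1* (exactly one zero) not detected by Q_p,q is 1^{p-1} 0 1^{p+q}, of length 2p+q. Consequently Q_p,q solves the (m,1)-problem for all m ≥ 2p+q+1 and fails for m = 2p+q. -/
/-- Number of zeros of word `w` among positions `0 .. m-1`. -/
def zerosIn (m : ℕ) (w : ℕ → Bool) : ℕ :=
  ((Finset.range m).filter (fun j => w j = false)).card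

/-- Seed `Q` matches word `w` of length `m` at position `i`. -/
def MatchesAt (Q : Finset ℕ) (m : ℕ) (w : ℕ → Bool) (i : ℕ) : Prop :=
  ∀ p ∈ Q, i + p < m ∧ w (i + p) = true

/-- Seed `Q` detects word `w` of length `m`. -/
def Detects (Q : Finset ℕ) (m : ℕ) (w : ℕ → Bool) : Prop :=
  ∃ i, MatchesAt Q m w i

/-- Seed `Q` solves the linear `(m,k)`-problem. -/
def Solves (Q : Finset ℕ) (m k : ℕ) : Prop :=
  ∀ w : ℕ → Bool, zerosIn m w ≤ k → Detects Q m w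

/-- A family of seeds solves the linear `(m,k)`-problem. -/
def FSolves (F : Set (Finset ℕ)) (m k : ℕ) : Prop :=
  ∀ w : ℕ → Bool, zerosIn m w ≤ k → ∃ Q ∈ F, Detects Q m w

/-- Seed `Q` solves the cyclic `(m,k)`-problem. -/
def CSolves (Q : Finset ℕ) (m k : ℕ) : Prop :=
  ∀ w : ℕ → Bool, zerosIn m w ≤ k →
    ∃ j < m, ∀ p ∈ Q, w ((j + p) % m) = true

/-- The seed `#^p - #^q` : matching positions `0..p-1` and `p+1..p+q`. -/
def Qpq (p q : ℕ) : Finset ℕ := Finset.range p ∪ Finset.Icc (p+1) (p+q)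

/-- The `k`-critical length of a seed: least `m` such that it solves the `(m,k)`-problem. -/
noncomputable def critLen (Q : Finset ℕ) (k : ℕ) : ℕ := sInf {m | Solves Q m k}

/-!
A word with its only zero at `z` is caught by placing the joker of `#^p - #^q` on `z` when
`p ≤ z ≤ p + q`, and otherwise by placing the whole seed strictly after resp. before `z`;
each placement fits once the word has length at least `2p + q + 1` (using `q ≤ p`).
For `1^{p-1} 0 1^{p+q}`, any placement inside a word of length at most `2p + q` starts
before position `p`, so its first block of `p` positions covers the zero.
-/

lemma mem_Qpq {p q j : ℕ} : j ∈ Qpq p q ↔ j < p ∨ p + 1 ≤ j ∧ j ≤ p + q := by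
  simp [Qpq]

lemma zerosIn_decide_ne (m z : ℕ) :
    zerosIn m (fun j => decide (j ≠ z)) = if z < m then 1 else 0 := by
  simp only [zerosIn, decide_eq_false_iff_not, not_not, Finset.filter_eq', Finset.mem_range]
  split_ifs <;> rfl

lemma exists_forall_eq_true_of_zerosIn_le_one {m : ℕ} {w : ℕ → Bool} (h : zerosIn m w ≤ 1) :
    ∃ z, ∀ j < m, j ≠ z → w j = true := by
  obtain ⟨z, hz⟩ := Finset.card_le_one_iff_subset_singleton.mp h
  refine ⟨z, fun j hj hjz => ?_⟩
  by_contra hw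
  exact hjz (Finset.mem_singleton.mp (hz (by simpa [hj] using hw)))

lemma detects_Qpq_of_forall_ne {p q m z : ℕ} {w : ℕ → Bool} (hpq : q ≤ p)
    (hm : 2 * p + q + 1 ≤ m) (hw : ∀ j < m, j ≠ z → w j = true) :
    Detects (Qpq p q) m w := by
  have hfit : ∀ i, (∀ r ∈ Qpq p q, i + r ≠ z) → i + p + q < m → Detects (Qpq p q) m w :=
    fun i hz hi => ⟨i, fun r hr => by
      have := mem_Qpq.mp hr
      exact ⟨by omega, hw _ (by omega) (hz r hr)⟩⟩
  by_cases hzp : z < p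
  · exact hfit (z + 1) (fun r _ => by omega) (by omega)
  by_cases hzpq : z ≤ p + q
  · exact hfit (z - p) (fun r hr => by have := mem_Qpq.mp hr; omega) (by omega)
  · exact hfit 0 (fun r hr => by have := mem_Qpq.mp hr; omega) (by omega)

lemma solves_Qpq_one {p q m : ℕ} (hpq : q ≤ p) (hm : 2 * p + q + 1 ≤ m) :
    Solves (Qpq p q) m 1 := fun _ hw =>
  have ⟨_, hz⟩ := exists_forall_eq_true_of_zerosIn_le_one hw
  detects_Qpq_of_forall_ne hpq hm hz

lemma not_detects_Qpq_decide_ne {p q m : ℕ} (hq : 1 ≤ q) (hm : m ≤ 2 * p + q) :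
    ¬ Detects (Qpq p q) m (fun j => decide (j ≠ p - 1)) := by
  rintro ⟨i, hi⟩
  have hip : i < p := by have := (hi (p + q) (mem_Qpq.mpr (by omega))).1; omega
  have hzero := (hi (p - 1 - i) (mem_Qpq.mpr (by omega))).2
  simp only [show i + (p - 1 - i) = p - 1 by omega] at hzero
  simp at hzero

/-- for `p ≥ q ≥ 1`, the longest binary word with exactly one zero
not detected by `#^p - #^q` is `1^{p-1} 0 1^{p+q}` of length `2p+q`; consequently
the seed solves the `(m,1)`-problem iff `m ≥ 2p+q+1`. -/
theorem stmt2 (p q : ℕ) (hq : 1 ≤ q) (hpq : q ≤ p) :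
    (zerosIn (2*p+q) (fun j => decide (j ≠ p - 1)) = 1 ∧
      ¬ Detects (Qpq p q) (2*p+q) (fun j => decide (j ≠ p - 1))) ∧
    (∀ m : ℕ, ∀ w : ℕ → Bool, zerosIn m w = 1 → ¬ Detects (Qpq p q) m w → m ≤ 2*p+q) ∧
    (∀ m : ℕ, Solves (Qpq p q) m 1 ↔ 2*p+q+1 ≤ m) := by
  refine ⟨⟨?_, not_detects_Qpq_decide_ne hq le_rfl⟩, ?_, fun m => ⟨?_, solves_Qpq_one hpq⟩⟩
  · rw [zerosIn_decide_ne, if_pos (by omega)]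
  · intro m w hw hnd
    by_contra hm
    exact hnd (solves_Qpq_one hpq (by omega) w hw.le)
  · intro hs
    by_contra hm
    have hzeros : zerosIn m (fun j => decide (j ≠ p - 1)) ≤ 1 := by
      rw [zerosIn_decide_ne]; split_ifs <;> omega
    exact not_detects_Qpq_decide_ne hq (by omega) (hs _ hzeros)
end

section
/- Let Q = #^p - #^q with p ≥ 2q+1, p,q ≥ 1, and let k ≥ 1. The longest word in (1*0)^k 1* (exactly k zeros) not detected by Q is (1^{p-1} 0)^k 1^{p+q}, of length (k+1)p + q. Hence Q solves the (m,k)-problem exactly for m ≥ (k+1)p + q + 1. -/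
lemma zerosIn_mono (w : ℕ → Bool) {m m' : ℕ} (h : m ≤ m') : zerosIn m w ≤ zerosIn m' w :=
  Finset.card_le_card (Finset.filter_subset_filter _ (Finset.range_subset_range.2 h))

section Zeros

variable {m : ℕ} {w : ℕ → Bool}

lemma zerosIn_lt_of_eq_false {z : ℕ} (hz : z < m) (hw : w z = false) :
    zerosIn z w < zerosIn m w := by
  have hsucc : zerosIn (z + 1) w = zerosIn z w + 1 := by
    rw [zerosIn, zerosIn, Finset.range_add_one, Finset.filter_insert, if_pos hw,
      Finset.card_insert_of_notMem (by simp)]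
  have := zerosIn_mono w (show z + 1 ≤ m from hz)
  omega

lemma eq_true_of_zerosIn_eq_zero (h : zerosIn m w = 0) {y : ℕ} (hy : y < m) : w y = true := by
  rw [zerosIn, Finset.card_eq_zero, Finset.filter_eq_empty_iff] at h
  simpa using h (Finset.mem_range.2 hy)

lemma exists_last_zero (h : zerosIn m w ≠ 0) :
    ∃ z < m, w z = false ∧ zerosIn z w < zerosIn m w ∧ ∀ y, z < y → y < m → w y = true := by
  set S := (Finset.range m).filter (fun j => w j = false)
  have hS : S.Nonempty := Finset.card_pos.1 (Nat.pos_of_ne_zero h)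
  obtain ⟨hzm, hzf⟩ := Finset.mem_filter.1 (S.max'_mem hS)
  have hzm := Finset.mem_range.1 hzm
  refine ⟨S.max' hS, hzm, hzf, zerosIn_lt_of_eq_false hzm hzf, fun y hzy hym => ?_⟩
  by_contra hy
  have hyS : y ∈ S := Finset.mem_filter.2 ⟨Finset.mem_range.2 hym, by simpa using hy⟩
  exact (S.le_max' y hyS).not_gt hzy

end Zeros

lemma Detects.mono {Q : Finset ℕ} {m m' : ℕ} {w : ℕ → Bool} (h : m ≤ m') :
    Detects Q m w → Detects Q m' w := fun ⟨i, hi⟩ =>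
  ⟨i, fun j hj => ⟨(hi j hj).1.trans_le h, (hi j hj).2⟩⟩

section Seed

variable {p q m : ℕ} {w : ℕ → Bool}

lemma detects_Qpq_of_window (i : ℕ) (hm : i + p + q < m)
    (hfront : ∀ j, i ≤ j → j < i + p → w j = true)
    (hback : ∀ j, i + p < j → j ≤ i + p + q → w j = true) :
    Detects (Qpq p q) m w := by
  refine ⟨i, fun j hj => ?_⟩
  rcases Finset.mem_union.1 hj with h | h
  · rw [Finset.mem_range] at h
    exact ⟨by omega, hfront (i + j) (by omega) (by omega)⟩
  · rw [Finset.mem_Icc] at h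
    exact ⟨by omega, hback (i + j) (by omega) (by omega)⟩

lemma not_detects_Qpq_of_false_in_window (hq : 1 ≤ q)
    (hwin : ∀ i, i + p + q < m → ∃ j, i ≤ j ∧ j < i + p ∧ w j = false) :
    ¬ Detects (Qpq p q) m w := by
  rintro ⟨i, hi⟩
  have hlast : p + q ∈ Qpq p q := Finset.mem_union_right _ (Finset.mem_Icc.2 ⟨by omega, le_rfl⟩)
  obtain ⟨j, hij, hjp, hwj⟩ := hwin i (by have := (hi _ hlast).1; omega)
  have hfront : j - i ∈ Qpq p q := Finset.mem_union_left _ (Finset.mem_range.2 (by omega))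
  have := (hi _ hfront).2
  rw [Nat.add_sub_cancel' hij, hwj] at this
  exact Bool.false_ne_true this

lemma length_le_of_not_detects_of_true_after {z : ℕ} (hnd : ¬ Detects (Qpq p q) m w)
    (hafter : ∀ y, z < y → y < m → w y = true) : m ≤ z + p + q + 1 := by
  by_contra! hm
  exact hnd (detects_Qpq_of_window (z + 1) (by omega)
    (fun j hj _ => hafter j (by omega) (by omega)) (fun j _ hj => hafter j (by omega) (by omega)))

lemma exists_false_before_of_not_detects {z : ℕ} (hnd : ¬ Detects (Qpq p q) m w)
    (hafter : ∀ y, z < y → y < m → w y = true) (hpz : p ≤ z) (hzq : z + q < m) :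
    ∃ z' < z, z ≤ z' + p ∧ w z' = false := by
  by_contra! hbefore
  refine hnd (detects_Qpq_of_window (z - p) (by omega) (fun j hj hjz => ?_)
    (fun j hj _ => hafter j (by omega) (by omega)))
  simpa using hbefore j (by omega) (by omega)

lemma length_le_of_not_detects_Qpq (hp : 2 * q + 1 ≤ p) (t : ℕ) :
    ∀ m (w : ℕ → Bool), zerosIn m w ≤ t → ¬ Detects (Qpq p q) m w →
      m ≤ (t + 1) * p + q ∧ ∀ z < m, w z = false → m ≤ z + p → m < (t + 1) * p := by
  have hno_zeros : ∀ {t m} {w : ℕ → Bool}, zerosIn m w = 0 → ¬ Detects (Qpq p q) m w →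
      m ≤ (t + 1) * p + q ∧ ∀ z < m, w z = false → m ≤ z + p → m < (t + 1) * p := by
    intro t m w h0 hnd
    have hones := @eq_true_of_zerosIn_eq_zero m w h0
    refine ⟨?_, fun z hzm hzf _ => absurd (hones hzm) (by simp [hzf])⟩
    by_contra! hm
    have : p ≤ (t + 1) * p := Nat.le_mul_of_pos_left p (Nat.succ_pos t)
    exact hnd (detects_Qpq_of_window 0 (by omega)
      (fun j _ hj => hones (by omega)) (fun j _ hj => hones (by omega)))
  induction t with
  | zero => exact fun m w hz => hno_zeros (Nat.le_zero.1 hz)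
  | succ t ih =>
    intro m w hz hnd
    by_cases h0 : zerosIn m w = 0
    · exact hno_zeros h0 hnd
    have hexpand : (t + 1 + 1) * p = (t + 1) * p + p := by ring
    have htp : p ≤ (t + 1) * p := Nat.le_mul_of_pos_left p (Nat.succ_pos t)
    obtain ⟨z, hzm, hzf, hzlt, hafter⟩ := exists_last_zero h0
    obtain ⟨ihlen, ihlast⟩ :=
      ih z w (by omega) (fun h => hnd (h.mono hzm.le))
    have hend := length_le_of_not_detects_of_true_after hnd hafter
    have hcases : z < p ∨ m ≤ z + q ∨ z < (t + 1) * p := by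
      by_contra! h
      obtain ⟨z', hz'z, hzz', hz'f⟩ := exists_false_before_of_not_detects hnd hafter h.1 h.2.1
      exact (ihlast z' hz'z hz'f hzz').not_ge h.2.2
    refine ⟨by omega, fun z₀ hz₀m hz₀f hz₀p => ?_⟩
    have hz₀z : z₀ ≤ z := by
      by_contra! h
      simp [hafter z₀ h hz₀m] at hz₀f
    omega

end Seed

-- `(1^{p-1} 0)^k` followed by ones
def extremalWord (p k : ℕ) : ℕ → Bool := fun j => decide (¬ (j % p = p - 1 ∧ j < k * p))

lemma zerosIn_extremalWord {p : ℕ} (hp : 0 < p) (k q : ℕ) :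
    zerosIn ((k + 1) * p + q) (extremalWord p k) = k := by
  have himage : (Finset.range ((k + 1) * p + q)).filter (fun j => extremalWord p k j = false)
      = (Finset.range k).image (fun i => i * p + (p - 1)) := by
    ext j
    simp only [extremalWord, Finset.mem_filter, Finset.mem_range, Finset.mem_image,
      decide_eq_false_iff_not, not_not]
    constructor
    · rintro ⟨-, hmod, hjk⟩
      exact ⟨j / p, (Nat.div_lt_iff_lt_mul hp).2 hjk, hmod ▸ Nat.div_add_mod' j p⟩
    · rintro ⟨i, hik, rfl⟩
      have hmod : (i * p + (p - 1)) % p = p - 1 := by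
        rw [Nat.mul_add_mod_self_right, Nat.mod_eq_of_lt (by omega)]
      have hik' : (i + 1) * p ≤ k * p := Nat.mul_le_mul_right p hik
      have : k * p ≤ (k + 1) * p := Nat.mul_le_mul_right p k.le_succ
      exact ⟨by rw [add_mul] at hik'; omega, hmod, by rw [add_mul] at hik'; omega⟩
  rw [zerosIn, himage, Finset.card_image_of_injective _ fun a b hab => ?_, Finset.card_range]
  exact Nat.eq_of_mul_eq_mul_right hp (by simpa using hab)

lemma not_detects_extremalWord {p q : ℕ} (hq : 1 ≤ q) (hp : 0 < p) (k : ℕ) :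
    ¬ Detects (Qpq p q) ((k + 1) * p + q) (extremalWord p k) := by
  refine not_detects_Qpq_of_false_in_window hq fun i hi => ?_
  -- the window starting at `i` contains the end `p * (i / p) + (p - 1)` of the block of `i`
  have hik : i / p < k := (Nat.div_lt_iff_lt_mul hp).2 (by rw [add_mul] at hi; omega)
  have hblock : p * (i / p + 1) ≤ p * k := Nat.mul_le_mul_left p hik
  have hdiv := Nat.div_add_mod i p
  have hmod := Nat.mod_lt i hp
  refine ⟨p * (i / p) + (p - 1), by omega, by omega, ?_⟩
  simp only [extremalWord, decide_eq_false_iff_not, not_not, Nat.mul_add_mod,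
    Nat.mod_eq_of_lt (show p - 1 < p by omega), true_and]
  rw [mul_add] at hblock
  rw [mul_comm k]
  omega

theorem stmt4_general (p q k : ℕ) (hq : 1 ≤ q) (hp : 2*q+1 ≤ p) :
    (zerosIn ((k+1)*p+q) (fun j => decide (¬ (j % p = p - 1 ∧ j < k * p))) = k ∧
      ¬ Detects (Qpq p q) ((k+1)*p+q) (fun j => decide (¬ (j % p = p - 1 ∧ j < k * p)))) ∧
    (∀ m : ℕ, ∀ w : ℕ → Bool, zerosIn m w = k → ¬ Detects (Qpq p q) m w → m ≤ (k+1)*p+q) ∧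
    (∀ m : ℕ, Solves (Qpq p q) m k ↔ (k+1)*p+q+1 ≤ m) := by
  have hp₀ : 0 < p := by omega
  have hzeros := zerosIn_extremalWord hp₀ k q
  have hundetected := not_detects_extremalWord hq hp₀ k
  have hbound := length_le_of_not_detects_Qpq hp k
  refine ⟨⟨hzeros, hundetected⟩, fun m w hw hnd => (hbound m w hw.le hnd).1, fun m => ⟨?_, ?_⟩⟩
  · intro hsolves
    by_contra! hm
    have hm : m ≤ (k + 1) * p + q := by omega
    exact hundetected ((hsolves _ ((zerosIn_mono _ hm).trans_eq hzeros)).mono hm)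
  · intro hm w hw
    by_contra hnd
    have := (hbound m w hw hnd).1
    omega

/-- for `p ≥ 2q+1`, `q ≥ 1`, `k ≥ 1`, the longest word with exactly
`k` zeros not detected by `#^p - #^q` is `(1^{p-1} 0)^k 1^{p+q}` of length
`(k+1)p + q`; hence the seed solves the `(m,k)`-problem iff `m ≥ (k+1)p+q+1`. -/
theorem stmt4 (p q k : ℕ) (hq : 1 ≤ q) (hp : 2*q+1 ≤ p) (hk : 1 ≤ k) :
    (zerosIn ((k+1)*p+q) (fun j => decide (¬ (j % p = p - 1 ∧ j < k * p))) = k ∧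
      ¬ Detects (Qpq p q) ((k+1)*p+q) (fun j => decide (¬ (j % p = p - 1 ∧ j < k * p)))) ∧
    (∀ m : ℕ, ∀ w : ℕ → Bool, zerosIn m w = k → ¬ Detects (Qpq p q) m w → m ≤ (k+1)*p+q) ∧
    (∀ m : ℕ, Solves (Qpq p q) m k ↔ (k+1)*p+q+1 ≤ m) :=
  stmt4_general p q k hq hp
end

section
/- If the i-regular expansion i⊗F of a seed family F solves the (i·m, k)-problem, then F solves the (m, ⌊k/i⌋)-problem. -/
theorem Finset.sum_range_mul_div {M : Type*} [AddCommMonoid M] (f : ℕ → M) (i m : ℕ) :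
    ∑ j ∈ range (i * m), f (j / i) = i • ∑ t ∈ range m, f t := by
  induction m with
  | zero => simp
  | succ m ih =>
    have hblock : ∀ x ∈ range i, f ((i * m + x) / i) = f m := by
      intro x hx
      have hxi : x < i := mem_range.1 hx
      rw [Nat.mul_add_div (Nat.zero_lt_of_lt hxi), Nat.div_eq_of_lt hxi, Nat.add_zero]
    rw [Nat.mul_succ, sum_range_add, ih, sum_congr rfl hblock, sum_const, card_range,
      sum_range_succ, smul_add]

theorem zerosIn_stretch (v : ℕ → Bool) (i m : ℕ) :
    zerosIn (i * m) (fun j => v (j / i)) = i * zerosIn m v := by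
  simp only [zerosIn, Finset.card_filter]
  exact Finset.sum_range_mul_div (fun t => if v t = false then 1 else 0) i m

theorem MatchesAt.of_image_mul {Q : Finset ℕ} {v : ℕ → Bool} {i m a : ℕ}
    (h : MatchesAt (Q.image (i * ·)) (i * m) (fun j => v (j / i)) a) :
    MatchesAt Q m v (a / i) := by
  intro p hp
  obtain ⟨hlt, hv⟩ := h (i * p) (Finset.mem_image_of_mem _ hp)
  have hi : 0 < i := Nat.pos_of_mul_pos_right (lt_of_le_of_lt (Nat.zero_le _) hlt)
  have hdiv : (a + i * p) / i = a / i + p := Nat.add_mul_div_left a p hi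
  refine ⟨?_, hdiv ▸ hv⟩
  rw [← hdiv, Nat.div_lt_iff_lt_mul hi, Nat.mul_comm m]
  exact hlt

theorem stmt9_general (F : Set (Finset ℕ)) (m k i : ℕ)
    (h : FSolves ((fun Q => Q.image (fun p => i * p)) '' F) (i * m) k) :
    FSolves F m (k / i) := by
  intro v hv
  have hzeros : zerosIn (i * m) (fun j => v (j / i)) ≤ k := by
    rw [zerosIn_stretch]
    exact (Nat.mul_le_mul_left i hv).trans (Nat.mul_div_le k i)
  obtain ⟨_, ⟨Q, hQ, rfl⟩, a, ha⟩ := h _ hzeros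
  exact ⟨Q, hQ, a / i, ha.of_image_mul⟩

/-- if the `i`-regular expansion of a family solves the `(i·m,k)`-problem,
then the family solves the `(m, ⌊k/i⌋)`-problem. -/
theorem stmt9 (F : Set (Finset ℕ)) (m k i : ℕ) (hi : 1 ≤ i)
    (h : FSolves ((fun Q => Q.image (fun p => i * p)) '' F) (i * m) k) :
    FSolves F m (k / i) :=
  stmt9_general F m k i h
end

section
/- A seed Q solves the cyclic (m,k)-problem if and only if for every i ≥ 1, the seed Q_i = [Q, -^{m-s(Q)}]^i (the concatenation (Q · joker^{m-s(Q)})^i · Q, i.e. the union of translates Q + j·m for j = 0..i) solves the linear (m·(i+1) + s(Q) - 1, k)-problem. -/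
/-!
Folding a linear word of length `m(i+1) + s - 1` modulo `m` (a residue is a zero when some
position in its class is) gives a cyclic word with no more zeros, and a cyclic match of `Q` at
`j < m` lifts to a match of every translate `Q + l·m`, `l ≤ i`, at `j`. Conversely, a cyclic word
`v` is placed on `[m, 2m)` of an otherwise all-ones linear word; a match of `Q ∪ (Q + m)` must
start before `m`, and for each `p ∈ Q` one of `j + p`, `j + p + m` lands on `v` at `(j + p) mod m`.
-/

def iterSeed (Q : Finset ℕ) (m i : ℕ) : Finset ℕ :=
  (Finset.range (i + 1)).biUnion (fun j => Q.image (fun p => p + j * m))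

theorem mem_iterSeed {Q : Finset ℕ} {m i x : ℕ} :
    x ∈ iterSeed Q m i ↔ ∃ l ≤ i, ∃ p ∈ Q, p + l * m = x := by
  simp only [iterSeed, Finset.mem_biUnion, Finset.mem_range, Finset.mem_image, Nat.lt_succ_iff]

theorem add_mul_mem_iterSeed {Q : Finset ℕ} {m i p l : ℕ} (hp : p ∈ Q) (hl : l ≤ i) :
    p + l * m ∈ iterSeed Q m i :=
  mem_iterSeed.2 ⟨l, hl, p, hp, rfl⟩

def foldMod (m M : ℕ) (w : ℕ → Bool) : ℕ → Bool :=
  fun t => decide (∀ x < M, x % m = t → w x = true)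

theorem zerosIn_foldMod_le (m M : ℕ) (w : ℕ → Bool) :
    zerosIn m (foldMod m M w) ≤ zerosIn M w := by
  refine Finset.card_le_card_of_surjOn (· % m) fun t ht => ?_
  simp only [Finset.coe_filter, Finset.mem_range, foldMod, decide_eq_false_iff_not] at ht
  push Not at ht
  obtain ⟨-, x, hxM, rfl, hx⟩ := ht
  exact ⟨x, by simp [hxM, hx], rfl⟩

theorem CSolves.solves_iterSeed {Q : Finset ℕ} {m k b : ℕ} (hC : CSolves Q m k)
    (hb : ∀ p ∈ Q, p ≤ b) (i : ℕ) : Solves (iterSeed Q m i) (m * (i + 1) + b) k := by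
  intro w hw
  obtain ⟨j, hjm, hj⟩ := hC _ ((zerosIn_foldMod_le m _ w).trans hw)
  refine ⟨j, fun x hx => ?_⟩
  obtain ⟨l, hl, p, hp, rfl⟩ := mem_iterSeed.1 hx
  have hlt : j + (p + l * m) < m * (i + 1) + b := by
    have := Nat.mul_le_mul_right m hl
    have := hb p hp
    nlinarith
  refine ⟨hlt, ?_⟩
  have hfold := hj p hp
  simp only [foldMod, decide_eq_true_eq] at hfold
  exact hfold _ hlt (by rw [← add_assoc, Nat.add_mul_mod_self_right])

def padWord (m : ℕ) (v : ℕ → Bool) : ℕ → Bool :=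
  fun x => if m ≤ x ∧ x < 2 * m then v (x - m) else true

theorem padWord_eq_false {m x : ℕ} {v : ℕ → Bool} :
    padWord m v x = false ↔ m ≤ x ∧ x < 2 * m ∧ v (x - m) = false := by
  unfold padWord
  split_ifs with h
  · simp [h]
  · simpa using fun h1 h2 => absurd ⟨h1, h2⟩ h

theorem zerosIn_padWord_le (m M : ℕ) (v : ℕ → Bool) :
    zerosIn M (padWord m v) ≤ zerosIn m v := by
  refine Finset.card_le_card_of_injOn (· - m) (fun x hx => ?_) (fun x hx y hy hxy => ?_)
  · simp only [Finset.mem_coe, Finset.mem_filter, Finset.mem_range, padWord_eq_false] at hx ⊢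
    exact ⟨by omega, hx.2.2.2⟩
  · simp only [Finset.mem_coe, Finset.mem_filter, Finset.mem_range, padWord_eq_false] at hx hy
    simp only at hxy
    omega

theorem exists_add_mul_eq_mod_add {n m : ℕ} (h : n < 2 * m) :
    ∃ c ≤ 1, n + c * m = n % m + m := by
  rcases lt_or_ge n m with hlt | hge
  · exact ⟨1, le_rfl, by rw [Nat.mod_eq_of_lt hlt, one_mul]⟩
  · refine ⟨0, zero_le_one, ?_⟩
    rw [Nat.mod_eq_sub_mod hge, Nat.mod_eq_of_lt (by omega)]
    omega

theorem Solves.cSolves_of_iterSeed_one {Q : Finset ℕ} {m k b : ℕ} (hbQ : b ∈ Q)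
    (hspan : ∀ p ∈ Q, p < m) (hS : Solves (iterSeed Q m 1) (m * 2 + b) k) :
    CSolves Q m k := by
  intro v hv
  obtain ⟨j, hj⟩ := hS (padWord m v) ((zerosIn_padWord_le m _ v).trans hv)
  have hjm : j < m := by
    have := (hj _ (add_mul_mem_iterSeed (m := m) hbQ le_rfl)).1
    omega
  refine ⟨j, hjm, fun p hp => ?_⟩
  have hpm := hspan p hp
  obtain ⟨c, hc, hcm⟩ := exists_add_mul_eq_mod_add (n := j + p) (m := m) (by omega)
  have hmatch := (hj _ (add_mul_mem_iterSeed hp hc)).2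
  have hmod : (j + p) % m < m := Nat.mod_lt _ (by omega)
  rwa [← add_assoc, hcm, padWord, if_pos ⟨by omega, by omega⟩, Nat.add_sub_cancel] at hmatch

/-- a seed `Q` (with `0 ∈ Q`, span `s ≤ m`) solves the cyclic
`(m,k)`-problem iff for every `i ≥ 1` the iterated seed `⋃_{j=0}^{i} (Q + j·m)`
solves the linear `(m·(i+1) + s - 1, k)`-problem. -/
theorem stmt10 (Q : Finset ℕ) (h0 : 0 ∈ Q) (m k : ℕ)
    (hspan : ∀ p ∈ Q, p < m) :
    CSolves Q m k ↔
      ∀ i : ℕ, 1 ≤ i →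
        Solves ((Finset.range (i + 1)).biUnion (fun j => Q.image (fun p => p + j * m)))
          (m * (i + 1) + (Q.max' ⟨0, h0⟩ + 1) - 1) k := by
  constructor
  · intro hC i _
    rw [Nat.add_sub_assoc le_add_self, Nat.add_sub_cancel]
    exact hC.solves_iterSeed (fun p hp => Q.le_max' p hp) i
  · intro hS
    have hS1 := hS 1 le_rfl
    rw [Nat.add_sub_assoc le_add_self, Nat.add_sub_cancel] at hS1
    exact hS1.cSolves_of_iterSeed_one (Q.max'_mem _) hspan
end

section
/- For every i ≥ 0, the seed ⋃_{j=0}^{i}({0,1,2,4} + 7j) (pattern [###-#, --]^i) solves the linear (11 + 7i, 2)-problem. -/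
/-!
A zero at position `x` of a linear word only affects the residue `x % n`, so folding the word
modulo `n` gives a cyclic word of length `n` with no more zeros. A cyclic match of `Q` at `j` then
yields a linear match of the periodic seed `⋃_{j' ≤ i} (Q + n j')` at `j`, as long as the word is
long enough to contain it. For `Q = {0,1,2,4}` and `n = 7` the cyclic `(7,2)`-problem is a finite
check: the complement `{3,5,6}` of `Q` in `ℤ/7` is a perfect difference set, so any two residues can
be translated into it simultaneously.
-/

def periodicSeed (Q : Finset ℕ) (n i : ℕ) : Finset ℕ :=
  (Finset.range (i + 1)).biUnion (fun j => Q.image (fun p => p + n * j))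

def foldWord (w : ℕ → Bool) (L n : ℕ) (r : ℕ) : Bool :=
  decide (∀ x < L, x % n = r → w x = true)

lemma zerosIn_foldWord_le (w : ℕ → Bool) (L n : ℕ) : zerosIn n (foldWord w L n) ≤ zerosIn L w := by
  unfold zerosIn
  calc ((Finset.range n).filter (fun r => foldWord w L n r = false)).card
      ≤ (((Finset.range L).filter (fun x => w x = false)).image (· % n)).card := by
        refine Finset.card_le_card fun r hr => ?_
        simp only [Finset.mem_filter, Finset.mem_range, foldWord, decide_eq_false_iff_not] at hr
        push Not at hr
        obtain ⟨x, hxL, rfl, hx⟩ := hr.2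
        exact Finset.mem_image_of_mem _ (by simpa [hxL] using hx)
    _ ≤ _ := Finset.card_image_le

theorem solves_periodicSeed_of_cSolves {Q : Finset ℕ} {n k i L : ℕ} (hQ : CSolves Q n k)
    (hL : ∀ p ∈ Q, p + n * (i + 1) ≤ L) : Solves (periodicSeed Q n i) L k := by
  intro w hw
  obtain ⟨j, hjn, hj⟩ := hQ (foldWord w L n) ((zerosIn_foldWord_le w L n).trans hw)
  refine ⟨j, fun q hq => ?_⟩
  simp only [periodicSeed, Finset.mem_biUnion, Finset.mem_range, Finset.mem_image] at hq
  obtain ⟨j', hj', p, hp, rfl⟩ := hq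
  have hlt : j + (p + n * j') < L := by nlinarith [hL p hp]
  refine ⟨hlt, ?_⟩
  have hfold := hj p hp
  simp only [foldWord, decide_eq_true_eq] at hfold
  refine hfold _ hlt ?_
  rw [← add_assoc, Nat.add_mul_mod_self_left]

-- The complement `{3,5,6}` of the seed modulo 7 is a perfect difference set.
set_option maxRecDepth 10000 in
lemma exists_shift_avoiding_of_card_le_two : ∀ Z ∈ (Finset.range 7).powerset, Z.card ≤ 2 →
    ∃ t ∈ Finset.range 7, ∀ p ∈ ({0, 1, 2, 4} : Finset ℕ), (t + p) % 7 ∉ Z := by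
  decide

theorem cSolves_seven_two : CSolves {0, 1, 2, 4} 7 2 := by
  intro w hw
  obtain ⟨t, ht, hZ⟩ := exists_shift_avoiding_of_card_le_two _
    (Finset.mem_powerset.2 (Finset.filter_subset _ _)) hw
  refine ⟨t, Finset.mem_range.1 ht, fun p hp => ?_⟩
  by_contra hwp
  exact hZ p hp
    (Finset.mem_filter.2 ⟨Finset.mem_range.2 (Nat.mod_lt _ (by norm_num)), by simpa using hwp⟩)

/-- for every `i ≥ 0`, the seed `[###-#,--]^i = ⋃_{j=0}^{i} ({0,1,2,4} + 7j)`
solves the linear `(11 + 7i, 2)`-problem. -/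
theorem stmt12 (i : ℕ) :
    Solves ((Finset.range (i + 1)).biUnion
        (fun j => ({0, 1, 2, 4} : Finset ℕ).image (fun p => p + 7 * j)))
      (11 + 7 * i) 2 :=
  solves_periodicSeed_of_cSolves cSolves_seven_two fun p hp => by
    have : p ≤ 4 := by simp only [Finset.mem_insert, Finset.mem_singleton] at hp; omega
    omega
end

section
/- If a seed Q of span m solves the cyclic (m,k)-problem, then the number n of jokers of Q (i.e. n = m - |Q|) satisfies C(m,k)/m ≤ C(n,k). Consequently, for fixed k, n = Ω(m^{(k-1)/k}). -/
/-!
Encode a `k`-subset `S` of `{0, …, m-1}` as the word whose zeros are exactly `S`. A cyclic hit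
at offset `j` puts the back-rotated set `S - j (mod m)` inside the jokers, so `S` is a rotation
of a `k`-subset of the jokers: there are at most `m` rotations of each of the `C(n, k)` such
subsets, whence `C(m, k) ≤ m C(n, k)`. For `m ≥ 2k` the estimate `(m/2)^k ≤ k! C(m, k)` and
`C(n, k) ≤ n^k` turn this into `m^(k-1) ≤ 2^k k! n^k`, and taking `k`-th roots gives the
growth rate.
-/

open Finset Nat

lemma add_mod_add_sub_mod {m j x : ℕ} (hj : j ≤ m) (hx : x < m) :
    (j + (x + (m - j)) % m) % m = x := by
  rw [Nat.add_mod_mod, show j + (x + (m - j)) = x + m by omega, Nat.add_mod_right,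
    Nat.mod_eq_of_lt hx]

lemma exists_rotate_eq_of_cyclic_detects {m k : ℕ} {Q S : Finset ℕ}
    (hdet : ∀ w : ℕ → Bool, zerosIn m w = k → ∃ j < m, ∀ p ∈ Q, w ((j + p) % m) = true)
    (hS : S ∈ (range m).powersetCard k) :
    ∃ j < m, ∃ T ∈ (range m \ Q).powersetCard k, S = T.image (fun t => (j + t) % m) := by
  obtain ⟨hSm, hSk⟩ := mem_powersetCard.mp hS
  have hzeros : zerosIn m (fun x => decide (x ∉ S)) = k := by
    rw [zerosIn, ← hSk]
    congr 1
    ext x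
    simpa using fun hx => mem_range.mp (hSm hx)
  obtain ⟨j, hjm, hj⟩ := hdet _ hzeros
  have hinv : ∀ s ∈ S, (j + (s + (m - j)) % m) % m = s := fun s hs =>
    add_mod_add_sub_mod hjm.le (mem_range.mp (hSm hs))
  have hback : S = (S.image fun s => (s + (m - j)) % m).image fun t => (j + t) % m := by
    rw [image_image]
    exact (image_congr hinv).trans image_id' |>.symm
  refine ⟨j, hjm, S.image fun s => (s + (m - j)) % m, mem_powersetCard.mpr ⟨?_, ?_⟩, hback⟩
  · intro t ht
    obtain ⟨s, hs, rfl⟩ := mem_image.mp ht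
    refine mem_sdiff.mpr ⟨mem_range.mpr (Nat.mod_lt _ (by omega)), fun hQ => ?_⟩
    simpa [hinv s hs, hs] using hj _ hQ
  · rw [Finset.card_image_of_injOn, hSk]
    exact Set.LeftInvOn.injOn (f₁' := fun t => (j + t) % m) hinv

lemma choose_le_mul_choose_card_sdiff {m k : ℕ} {Q : Finset ℕ}
    (hdet : ∀ w : ℕ → Bool, zerosIn m w = k → ∃ j < m, ∀ p ∈ Q, w ((j + p) % m) = true) :
    m.choose k ≤ m * (#(range m \ Q)).choose k :=
  calc m.choose k = #((range m).powersetCard k) := by rw [card_powersetCard, card_range]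
    _ ≤ #((range m).biUnion fun j =>
          ((range m \ Q).powersetCard k).image fun T => T.image fun t => (j + t) % m) := by
      refine card_le_card fun S hS => ?_
      obtain ⟨j, hjm, T, hT, rfl⟩ := exists_rotate_eq_of_cyclic_detects hdet hS
      exact mem_biUnion.mpr ⟨j, mem_range.mpr hjm, mem_image_of_mem _ hT⟩
    _ ≤ ∑ _j ∈ range m, #((range m \ Q).powersetCard k) :=
      card_biUnion_le.trans (sum_le_sum fun _ _ => card_image_le)
    _ = m * (#(range m \ Q)).choose k := by simp

lemma pow_le_two_pow_mul_factorial_mul_choose {m k : ℕ} (hm : 2 * k ≤ m) :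
    m ^ k ≤ 2 ^ k * k ! * m.choose k :=
  calc m ^ k ≤ (2 * (m + 1 - k)) ^ k := Nat.pow_le_pow_left (by omega) k
    _ ≤ 2 ^ k * m.descFactorial k := by
      rw [mul_pow]; exact Nat.mul_le_mul_left _ (Nat.pow_sub_le_descFactorial m k)
    _ = 2 ^ k * k ! * m.choose k := by rw [Nat.descFactorial_eq_factorial_mul_choose, mul_assoc]

lemma pow_pred_le_of_choose_le_mul_choose {m n k : ℕ} (hk : 1 ≤ k) (hm : 2 * k ≤ m)
    (h : m.choose k ≤ m * n.choose k) :
    m ^ (k - 1) ≤ 2 ^ k * k ! * n ^ k := by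
  have hm0 : 0 < m := by omega
  refine Nat.le_of_mul_le_mul_left ?_ hm0
  calc m * m ^ (k - 1) = m ^ k := by rw [← pow_succ']; congr 1; omega
    _ ≤ 2 ^ k * k ! * (m * n.choose k) :=
      (pow_le_two_pow_mul_factorial_mul_choose hm).trans (Nat.mul_le_mul_left _ h)
    _ ≤ 2 ^ k * k ! * (m * n ^ k) :=
      Nat.mul_le_mul_left _ (Nat.mul_le_mul_left _ (Nat.choose_le_pow n k))
    _ = m * (2 ^ k * k ! * n ^ k) := by ring

lemma rpow_le_rpow_inv_mul_of_pow_pred_le {a b C : ℝ} {k : ℕ} (hk : 1 ≤ k) (ha : 0 ≤ a)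
    (hb : 0 ≤ b) (hC : 0 ≤ C) (h : a ^ (k - 1) ≤ C * b ^ k) :
    a ^ (((k : ℝ) - 1) / k) ≤ C ^ (k : ℝ)⁻¹ * b := by
  calc a ^ (((k : ℝ) - 1) / k) = (a ^ (k - 1)) ^ (k : ℝ)⁻¹ := by
        rw [div_eq_mul_inv, Real.rpow_mul ha, ← Nat.cast_pred hk, Real.rpow_natCast]
    _ ≤ (C * b ^ k) ^ (k : ℝ)⁻¹ := by gcongr
    _ = C ^ (k : ℝ)⁻¹ * b := by
        rw [Real.mul_rpow hC (by positivity), ← Real.rpow_natCast b k, ← Real.rpow_mul hb,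
          mul_inv_cancel₀ (by positivity), Real.rpow_one]

/-- if a seed of span `m` solves the cyclic `(m,k)`-problem (every word
with exactly `k` zeros is cyclically detected) then, with `n = m - |Q|` jokers,
`C(m,k)/m ≤ C(n,k)`; consequently, for fixed `k`, `n = Ω(m^{(k-1)/k})`. -/
theorem stmt13 (k : ℕ) (hk : 1 ≤ k) :
    (∀ m : ℕ, ∀ Q : Finset ℕ, Q ⊆ Finset.range m → 0 ∈ Q → m - 1 ∈ Q →
      (∀ w : ℕ → Bool, zerosIn m w = k →
        ∃ j < m, ∀ p ∈ Q, w ((j + p) % m) = true) →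
      Nat.choose m k ≤ m * Nat.choose (m - Q.card) k) ∧
    (∃ c : ℝ, 0 < c ∧ ∃ M : ℕ, ∀ m : ℕ, M ≤ m → ∀ Q : Finset ℕ,
      Q ⊆ Finset.range m → 0 ∈ Q → m - 1 ∈ Q →
      (∀ w : ℕ → Bool, zerosIn m w = k →
        ∃ j < m, ∀ p ∈ Q, w ((j + p) % m) = true) →
      c * (m : ℝ) ^ (((k : ℝ) - 1) / k) ≤ ((m - Q.card : ℕ) : ℝ)) := by
  have hcount : ∀ m : ℕ, ∀ Q : Finset ℕ, Q ⊆ Finset.range m →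
      (∀ w : ℕ → Bool, zerosIn m w = k → ∃ j < m, ∀ p ∈ Q, w ((j + p) % m) = true) →
      Nat.choose m k ≤ m * Nat.choose (m - Q.card) k := fun m Q hQ hdet => by
    simpa [card_sdiff_of_subset hQ] using choose_le_mul_choose_card_sdiff hdet
  refine ⟨fun m Q hQ _ _ => hcount m Q hQ,
    (((2 ^ k * k ! : ℕ) : ℝ) ^ (k : ℝ)⁻¹)⁻¹, by positivity, 2 * k, ?_⟩
  intro m hm Q hQ _ _ hdet
  have hpow : (m : ℝ) ^ (k - 1) ≤ ((2 ^ k * k ! : ℕ) : ℝ) * ((m - Q.card : ℕ) : ℝ) ^ k := by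
    exact_mod_cast pow_pred_le_of_choose_le_mul_choose hk hm (hcount m Q hQ hdet)
  rw [inv_mul_le_iff₀ (by positivity)]
  exact rpow_le_rpow_inv_mul_of_pow_pred_le hk (by positivity) (by positivity) (by positivity) hpow
end

section
/- For every k ≥ 1 and m ≥ 1, there exists a seed Q of span m solving the cyclic (m,k)-problem with at most k·m^{(k-1)/k} jokers (up to ceiling effects: at most k·⌈m^{1/k}⌉^{k-1} jokers suffice). -/
/-!
Write `J` for the set of positions `x` with `x % B ^ l < B ^ (l - 1)` for some `1 ≤ l ≤ k`:
the union of the joker intervals placed at steps `1, …, k`. Any `i` points can be shifted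
simultaneously into the first `i` steps: add to the shift found for `i - 1` of them a multiple of
`B ^ (i - 1)`, which preserves the earlier steps by periodicity, chosen so that the remaining point
lands in the step-`i` intervals. For the cyclic problem, rotate so that one mismatch sits at
position `0`; shifting the other `≤ k - 1` mismatches by `c < B ^ (k - 1)` puts them into `J`,
and whatever wraps around the end of the word, as well as the first mismatch itself, lands in
`[0, B ^ (k - 1))`, which is the step-`k` interval. Each step contributes at most `B ^ (k - 1)`
jokers when `m ≤ B ^ k`.
-/

open Finset

theorem Nat.exists_lt_add_mul_mod_mul_lt (y : ℕ) {n B : ℕ} (hn : 0 < n) (hB : 0 < B) :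
    ∃ t < B, (y + n * t) % (n * B) < n := by
  -- `t ≡ -(y / n) [MOD B]`, so `y + n * t ≡ y % n [MOD n * B]`
  set t := (B - 1) * (y / n) % B
  refine ⟨t, Nat.mod_lt _ hB, ?_⟩
  have hq : y / n + (B - 1) * (y / n) = B * (y / n) := by
    rw [Nat.sub_one_mul]
    have := Nat.le_mul_of_pos_left (y / n) hB
    omega
  obtain ⟨s, hs⟩ : B ∣ y / n + t := by
    rw [Nat.dvd_iff_mod_eq_zero, Nat.add_mod_mod, hq, Nat.mul_mod_right]
  have hsplit : y + n * t = y % n + n * B * s := by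
    rw [mul_assoc, ← hs, mul_add, ← add_assoc, Nat.mod_add_div]
  rw [hsplit, Nat.add_mul_mod_self_left,
    Nat.mod_eq_of_lt ((y.mod_lt hn).trans_le (Nat.le_mul_of_pos_right n hB))]
  exact y.mod_lt hn

def IsJoker (B k x : ℕ) : Prop := ∃ l ∈ Icc 1 k, x % B ^ l < B ^ (l - 1)

instance (B k : ℕ) : DecidablePred (IsJoker B k) := fun _ => by unfold IsJoker; infer_instance

def jokerSeed (B k m : ℕ) : Finset ℕ := {x ∈ range m | ¬ IsJoker B k x}

section IsJoker

variable {B i k x : ℕ}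

theorem IsJoker.mono (h : IsJoker B i x) (hik : i ≤ k) : IsJoker B k x :=
  let ⟨l, hl, hx⟩ := h
  ⟨l, Icc_subset_Icc_right hik hl, hx⟩

theorem isJoker_add_pow_mul (u : ℕ) : IsJoker B i (x + B ^ i * u) ↔ IsJoker B i x := by
  unfold IsJoker
  refine exists_congr fun l => and_congr_right fun hl => ?_
  rw [← pow_mul_pow_sub B (mem_Icc.1 hl).2, mul_assoc, Nat.add_mul_mod_self_left]

theorem isJoker_of_lt (hB : 0 < B) (hk : 1 ≤ k) (hx : x < B ^ (k - 1)) : IsJoker B k x :=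
  ⟨k, mem_Icc.2 ⟨hk, le_rfl⟩, by
    rwa [Nat.mod_eq_of_lt (hx.trans_le (Nat.pow_le_pow_right hB (k.sub_le 1)))]⟩

theorem isJoker_add_mod {c d m : ℕ} (hB : 0 < B) (hk : 1 ≤ k) (hd : d < m)
    (hc : c < B ^ (k - 1)) (h : IsJoker B (k - 1) (d + c)) : IsJoker B k ((d + c) % m) := by
  by_cases hdc : d + c < m
  · rw [Nat.mod_eq_of_lt hdc]
    exact h.mono (k.sub_le 1)
  · apply isJoker_of_lt hB hk
    have hwrap : (d + c) % m = (d + c - m) % m := Nat.mod_eq_sub_mod (by omega)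
    have := Nat.mod_le (d + c - m) m
    omega

theorem exists_add_isJoker (hB : 0 < B) (S : Finset ℕ) :
    ∀ {i}, #S ≤ i → ∃ c < B ^ i, ∀ d ∈ S, IsJoker B i (d + c) := by
  induction S using Finset.induction_on with
  | empty => exact fun {i} _ => ⟨0, pow_pos hB i, by simp⟩
  | insert a S ha ih =>
    intro i hi
    rw [card_insert_of_notMem ha] at hi
    obtain ⟨i, rfl⟩ : ∃ i', i = i' + 1 := ⟨i - 1, by omega⟩
    obtain ⟨c, hc, hS⟩ := ih (Nat.le_of_succ_le_succ hi)
    obtain ⟨t, ht, ha⟩ := Nat.exists_lt_add_mul_mod_mul_lt (a + c) (pow_pos hB i) hB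
    refine ⟨c + B ^ i * t, ?_, fun d hd => ?_⟩
    · calc c + B ^ i * t < B ^ i * (t + 1) := by rw [mul_add_one]; omega
        _ ≤ B ^ i * B := Nat.mul_le_mul_left _ ht
        _ = B ^ (i + 1) := (pow_succ B i).symm
    rw [← add_assoc]
    rcases mem_insert.1 hd with rfl | hd
    · exact ⟨i + 1, by simp, by rwa [pow_succ, Nat.add_sub_cancel]⟩
    · exact ((isJoker_add_pow_mul t).2 (hS d hd)).mono i.le_succ

end IsJoker

theorem exists_rotation_isJoker {B k m : ℕ} [NeZero m] (hB : 0 < B) (hk : 1 ≤ k)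
    (Z : Finset ℕ) (hZ : #Z ≤ k) : ∃ j < m, ∀ p < m, (j + p) % m ∈ Z → IsJoker B k p := by
  obtain ⟨z₀, hz₀⟩ : ∃ z₀, #(Z.erase z₀) ≤ k - 1 := by
    rcases Z.eq_empty_or_nonempty with rfl | ⟨z₀, hz₀⟩
    · exact ⟨0, by simp⟩
    · exact ⟨z₀, by rw [card_erase_of_mem hz₀]; omega⟩
  obtain ⟨c, hc, hshift⟩ := exists_add_isJoker hB
    ((Z.erase z₀).image fun z : ℕ => ((z - z₀ : ZMod m)).val) (card_image_le.trans hz₀)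
  refine ⟨((z₀ - c : ZMod m)).val, ZMod.val_lt _, fun p hp hpZ => ?_⟩
  set z := (((z₀ - c : ZMod m)).val + p) % m
  have hpz : (p : ZMod m) = z - z₀ + c := by
    simp only [z, ZMod.natCast_mod, Nat.cast_add, ZMod.natCast_zmod_val]
    ring
  by_cases hz : z = z₀
  · rw [hz, sub_self, zero_add, ZMod.natCast_eq_natCast_iff', Nat.mod_eq_of_lt hp] at hpz
    exact isJoker_of_lt hB hk (hpz ▸ (Nat.mod_le c m).trans_lt hc)
  · set d := ((z - z₀ : ZMod m)).val
    have hdc : (d + c) % m = p := by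
      rw [← Nat.mod_eq_of_lt hp, ← ZMod.natCast_eq_natCast_iff', hpz, Nat.cast_add,
        ZMod.natCast_zmod_val]
    rw [← hdc]
    exact isJoker_add_mod hB hk (ZMod.val_lt _) hc
      (hshift d (mem_image_of_mem _ (mem_erase.2 ⟨hz, hpZ⟩)))

theorem cSolves_jokerSeed {B k m : ℕ} [NeZero m] (hB : 0 < B) (hk : 1 ≤ k) :
    CSolves (jokerSeed B k m) m k := by
  intro w hw
  obtain ⟨j, hj, hrot⟩ := exists_rotation_isJoker (m := m) hB hk _ hw
  refine ⟨j, hj, fun p hp => ?_⟩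
  rw [jokerSeed, mem_filter, mem_range] at hp
  by_contra hwp
  exact hp.2 (hrot p hp.1 (mem_filter.2 ⟨mem_range.2 (Nat.mod_lt _ (NeZero.pos m)), by simpa using hwp⟩))

theorem sub_card_jokerSeed (B k m : ℕ) :
    m - #(jokerSeed B k m) = #{x ∈ range m | IsJoker B k x} := by
  rw [jokerSeed, filter_not, card_sdiff_of_subset (filter_subset _ _), card_range,
    Nat.sub_sub_self ((card_filter_le _ _).trans (card_range m).le)]

theorem card_filter_mod_lt_le (n a b : ℕ) : #{x ∈ range (n * a) | x % a < b} ≤ n * b := by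
  calc #{x ∈ range (n * a) | x % a < b} ≤ #(range n ×ˢ range b) := ?_
    _ = n * b := by simp
  refine card_le_card_of_injOn (fun x => (x / a, x % a)) (fun x hx => ?_) (fun x _ y _ hxy => ?_)
  · simp only [coe_filter, mem_range, Set.mem_ofPred_eq] at hx
    simp only [coe_product, coe_range, Set.mem_prod, Set.mem_Iio]
    exact ⟨Nat.div_lt_of_lt_mul (by rw [mul_comm]; exact hx.1), hx.2⟩
  · simp only [Prod.mk.injEq] at hxy
    rw [← Nat.div_add_mod x a, ← Nat.div_add_mod y a, hxy.1, hxy.2]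

theorem card_filter_isJoker_le {B k m : ℕ} (hm : m ≤ B ^ k) :
    #{x ∈ range m | IsJoker B k x} ≤ k * B ^ (k - 1) := by
  calc #{x ∈ range m | IsJoker B k x}
      ≤ #((Icc 1 k).biUnion fun l => {x ∈ range (B ^ (k - l) * B ^ l) | x % B ^ l < B ^ (l - 1)}) := by
        refine card_le_card fun x hx => ?_
        obtain ⟨hxm, l, hl, hx⟩ := mem_filter.1 hx
        refine mem_biUnion.2 ⟨l, hl, mem_filter.2 ⟨mem_range.2 ?_, hx⟩⟩
        rw [← pow_add, Nat.sub_add_cancel (mem_Icc.1 hl).2]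
        exact (mem_range.1 hxm).trans_le hm
    _ ≤ ∑ l ∈ Icc 1 k, B ^ (k - l) * B ^ (l - 1) :=
        card_biUnion_le.trans (sum_le_sum fun l _ => card_filter_mod_lt_le _ _ _)
    _ = ∑ l ∈ Icc 1 k, B ^ (k - 1) := by
        refine sum_congr rfl fun l hl => ?_
        rw [← pow_add]
        congr 1
        have := mem_Icc.1 hl
        omega
    _ = k * B ^ (k - 1) := by simp

theorem le_natCeil_rpow_one_div_pow (m : ℕ) {k : ℕ} (hk : k ≠ 0) :
    m ≤ ⌈(m : ℝ) ^ ((1 : ℝ) / k)⌉₊ ^ k := by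
  have h : (m : ℝ) ≤ (⌈(m : ℝ) ^ ((1 : ℝ) / k)⌉₊ : ℝ) ^ k := by
    calc (m : ℝ) = ((m : ℝ) ^ ((1 : ℝ) / k)) ^ k := by
          rw [one_div, Real.rpow_inv_natCast_pow m.cast_nonneg hk]
      _ ≤ _ := pow_le_pow_left₀ (by positivity) (Nat.le_ceil _) k
  exact_mod_cast h

/-- for every `k ≥ 1` and `m ≥ 1` there is a seed of span `m` solving the
cyclic `(m,k)`-problem with at most `k·⌈m^{1/k}⌉^{k-1}` jokers. -/
theorem stmt14 (k m : ℕ) (hk : 1 ≤ k) (hm : 1 ≤ m) :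
    ∃ Q : Finset ℕ, Q ⊆ Finset.range m ∧ CSolves Q m k ∧
      m - Q.card ≤ k * (⌈(m : ℝ) ^ ((1 : ℝ) / k)⌉₊) ^ (k - 1) := by
  set B := ⌈(m : ℝ) ^ ((1 : ℝ) / k)⌉₊
  have hmB : m ≤ B ^ k := le_natCeil_rpow_one_div_pow m (by omega)
  have hB : 0 < B := Nat.pos_of_ne_zero fun h => by simp [h, Nat.zero_pow hk] at hmB; omega
  have : NeZero m := ⟨by omega⟩
  refine ⟨jokerSeed B k m, filter_subset _ _, cSolves_jokerSeed hB hk, ?_⟩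
  rw [sub_card_jokerSeed]
  exact card_filter_isJoker_le hmB
end
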